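/- For every integer j ≥ 1, setting m = 2 + ⌊3j/(p−1)⌋, the lead monomial (graded reverse lexicographic order with a0 < a1 < a2 < a3) of tr_B^G(N^j · tr^P(a2^{(m−1)(p−1)−3j} a3^{p−1})) equals a3^{pj} a2^{m(p−1)−3j}. -/

import Mathlib

open MvPolynomial

noncomputable section

/-- The right action of the 2×2 matrix `g` over `F_p` on `F[V] = F[a₃,a₂,a₁,a₀]`
(with `aᵢ = X i`), given by the dual of the third symmetric power representation. -/
def act (p : ℕ) [Fact p.Prime] (F : Type) [Field F] [CharP F p]
    (g : Matrix (Fin 2) (Fin 2) (ZMod p)) :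
    MvPolynomial (Fin 4) F →ₐ[F] MvPolynomial (Fin 4) F :=
  letI c : ZMod p → MvPolynomial (Fin 4) F := fun x => C (ZMod.castHom (dvd_refl p) F x)
  letI al := c (g 0 0)
  letI be := c (g 0 1)
  letI ga := c (g 1 0)
  letI de := c (g 1 1)
  aeval ![
    de ^ 3 * X 0 + 3 * de ^ 2 * ga * X 1 + 3 * de * ga ^ 2 * X 2 + ga ^ 3 * X 3,
    de ^ 2 * be * X 0 + (de ^ 2 * al + 2 * de * be * ga) * X 1
      + (2 * de * ga * al + be * ga ^ 2) * X 2 + ga ^ 2 * al * X 3,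
    de * be ^ 2 * X 0 + (2 * de * be * al + be ^ 2 * ga) * X 1
      + (de * al ^ 2 + 2 * be * ga * al) * X 2 + ga * al ^ 2 * X 3,
    be ^ 3 * X 0 + 3 * be ^ 2 * al * X 1 + 3 * be * al ^ 2 * X 2 + al ^ 3 * X 3]

/-- The transfer with respect to the Sylow `p`-subgroup `P = ⟨σ⟩`,
`tr^P(f) = ∑_{τ ∈ P} (f)τ`, where the elements of `P` are the matrices `[[1,s],[0,1]]`. -/
def trP (p : ℕ) [Fact p.Prime] (F : Type) [Field F] [CharP F p]
    (f : MvPolynomial (Fin 4) F) : MvPolynomial (Fin 4) F :=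
  ∑ s : ZMod p, act p F !![1, s; 0, 1] f

/-- The relative transfer `tr_B^G(f) = ∑_{τ ∈ Q ∪ {η}} (f)τ`, using the coset
representatives `Q ∪ {η}` of the Borel subgroup `B` in `G = SL₂(F_p)`. -/
def trBG (p : ℕ) [Fact p.Prime] (F : Type) [Field F] [CharP F p]
    (f : MvPolynomial (Fin 4) F) : MvPolynomial (Fin 4) F :=
  (∑ s : ZMod p, act p F !![1, 0; s, 1] f) + act p F !![0, 1; -1, 0] f

/-- The full transfer `tr^G(f) = ∑_{τ ∈ SL₂(F_p)} (f)τ`. -/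
def trG (p : ℕ) [Fact p.Prime] (F : Type) [Field F] [CharP F p]
    (f : MvPolynomial (Fin 4) F) : MvPolynomial (Fin 4) F :=
  ∑ g : Matrix.SpecialLinearGroup (Fin 2) (ZMod p), act p F g.1 f

/-- `N = ∏_{τ ∈ P} (a₃)τ = ∏_{s ∈ F_p} (a₃ + 3s a₂ + 3s² a₁ + s³ a₀)`. -/
def Npoly (p : ℕ) [Fact p.Prime] (F : Type) [Field F] [CharP F p] :
    MvPolynomial (Fin 4) F :=
  ∏ s : ZMod p, act p F !![1, s; 0, 1] (X 3)

/-- The weight of the monomial `a₃^e₃ a₂^e₂ a₁^e₁ a₀^e₀`, i.e. `3e₃ + e₂ - e₁ - 3e₀`. -/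
def wt (d : Fin 4 →₀ ℕ) : ℤ :=
  3 * (d 3 : ℤ) + (d 2 : ℤ) - (d 1 : ℤ) - 3 * (d 0 : ℤ)

/-- `f` is isobaric of weight `lam` modulo `p - 1`: every monomial occurring in `f`
has weight congruent to `lam` modulo `p - 1`. -/
def Isobaric (p : ℕ) {F : Type} [Field F] (f : MvPolynomial (Fin 4) F) (lam : ℤ) : Prop :=
  ∀ d ∈ f.support, ((p : ℤ) - 1) ∣ (wt d - lam)

/-- Strict grevlex comparison on exponent vectors, for the graded reverse
lexicographic order with `a₀ < a₁ < a₂ < a₃`. -/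
def grevlexLt (d e : Fin 4 →₀ ℕ) : Prop :=
  (∑ i : Fin 4, d i) < (∑ i : Fin 4, e i) ∨
    ((∑ i : Fin 4, d i) = (∑ i : Fin 4, e i) ∧
      ∃ k : Fin 4, e k < d k ∧ ∀ j : Fin 4, j < k → d j = e j)

/-- `d` is the lead monomial of `f` in the grevlex order with `a₀ < a₁ < a₂ < a₃`. -/
def LeadMonomialIs {F : Type} [Field F] (f : MvPolynomial (Fin 4) F) (d : Fin 4 →₀ ℕ) : Prop :=
  coeff d f ≠ 0 ∧ ∀ e ∈ f.support, e ≠ d → grevlexLt e d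

/-- The lead term of `f` is `c · x^d` in the grevlex order with `a₀ < a₁ < a₂ < a₃`. -/
def LeadTermIs {F : Type} [Field F] (f : MvPolynomial (Fin 4) F) (c : F) (d : Fin 4 →₀ ℕ) :
    Prop :=
  LeadMonomialIs f d ∧ coeff d f = c

/-- The discriminant `D` of the binary cubic. -/
def Dpoly (F : Type) [Field F] : MvPolynomial (Fin 4) F :=
  3 * X 2 ^ 2 * X 1 ^ 2 - 4 * X 3 * X 1 ^ 3 - 4 * X 2 ^ 3 * X 0
    + 6 * X 3 * X 2 * X 1 * X 0 - X 3 ^ 2 * X 0 ^ 2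

/-- `K = -tr^G(a₁^{p-1})`. -/
def Kpoly (p : ℕ) [Fact p.Prime] (F : Type) [Field F] [CharP F p] :
    MvPolynomial (Fin 4) F :=
  - trG p F (X 1 ^ (p - 1))

/-- Dickson's invariant `L = 3(a₂^p a₁ - a₂ a₁^p) - (a₃^p a₀ - a₃ a₀^p)`. -/
def Lpoly (p : ℕ) (F : Type) [Field F] : MvPolynomial (Fin 4) F :=
  3 * (X 2 ^ p * X 1 - X 2 * X 1 ^ p) - (X 3 ^ p * X 0 - X 3 * X 0 ^ p)

/-- `e = 2a₁³ + a₀(a₃a₀ - 3a₂a₁)`. -/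
def epoly (F : Type) [Field F] : MvPolynomial (Fin 4) F :=
  2 * X 1 ^ 3 + X 0 * (X 3 * X 0 - 3 * X 2 * X 1)

/-- `d = a₁² - a₂a₀`. -/
def dpoly (F : Type) [Field F] : MvPolynomial (Fin 4) F :=
  X 1 ^ 2 - X 2 * X 0

/-- `ξ = 3a₂² - 4a₃a₁`. -/
def xipoly (F : Type) [Field F] : MvPolynomial (Fin 4) F :=
  3 * X 2 ^ 2 - 4 * X 3 * X 1

/-- The ring of `SL₂(F_p)`-invariants `F[V]^{SL₂(F_p)}`, as a subalgebra of `F[V]`. -/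
def invariants (p : ℕ) [Fact p.Prime] (F : Type) [Field F] [CharP F p] :
    Subalgebra F (MvPolynomial (Fin 4) F) where
  carrier := {f | ∀ g : Matrix.SpecialLinearGroup (Fin 2) (ZMod p), act p F g.1 f = f}
  mul_mem' := fun hf hg g => by rw [map_mul, hf g, hg g]
  one_mem' := fun g => map_one _
  add_mem' := fun hf hg g => by rw [map_add, hf g, hg g]
  zero_mem' := fun g => map_zero _
  algebraMap_mem' := fun c g => (act _ _ _).commutes c

/-!
`f = tr_B^G(N^j · tr^P(a₂^k a₃^{p-1}))` is homogeneous and `d = a₃^{pj} a₂^K` involves neither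
`a₀` nor `a₁`, so every monomial of `f` containing `a₀` or `a₁` is grevlex-smaller than `d`; the
remaining ones are the monomials of the specialisation `f̄` of `f` at `a₀ = a₁ = 0`.
Since `N` is the product of the `P`-orbit of `a₃`, and `(a₃)g` vanishes at `a₀ = a₁ = 0` as soon
as `g₀₀ = 0`, a coset representative `τ` with `τ₁₀ ≠ 0` kills `(N)τ` in `f̄` (take the factor
`(a₃)σ_t τ` with `t = -τ₀₀ / τ₁₀`). Only `τ = 1` survives, and `∑_t (a₃ + 3t a₂)^{p-1} = -a₂^{p-1}`
gives `f̄ = -a₂^K N̄^j`, with `N̄` the specialisation of `N` and `K = k + p - 1`. Every monomial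
of `f̄` thus has `a₂`-degree at least `K`, and the coefficient of `d` is minus that of `a₃^{pj}`
in the homogeneous `N̄^j`, i.e. minus its value at `(a₀, a₁, a₂, a₃) = (0, 0, 0, 1)`, which is
`-1`.
-/

section FiniteField

variable {K : Type*} [Field K] [Fintype K]

theorem FiniteField.sum_pow_card_sub_one : ∑ x : K, x ^ (Fintype.card K - 1) = -1 := by
  classical
  have hq : Fintype.card K - 1 ≠ 0 := by
    have := Fintype.one_lt_card (α := K)
    omega
  calc ∑ x : K, x ^ (Fintype.card K - 1)
      = ∑ x : K, (1 - if x = 0 then 1 else 0) := by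
        refine Fintype.sum_congr _ _ fun x => ?_
        by_cases hx : x = 0
        · simp [hx, zero_pow hq]
        · simp [hx, FiniteField.pow_card_sub_one_eq_one x hx]
    _ = -1 := by simp [Finset.sum_sub_distrib]

theorem FiniteField.sum_add_mul_pow_card_sub_one {A : Type*} [CommRing A] (φ : K →+* A)
    (a b : A) :
    ∑ x : K, (a + φ x * b) ^ (Fintype.card K - 1) = -b ^ (Fintype.card K - 1) := by
  have hsum : ∀ i ∈ Finset.range (Fintype.card K - 1 + 1), i ≠ Fintype.card K - 1 →
      ∑ x : K, φ x ^ i = 0 := fun i hi hin => by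
    simp only [← map_pow, ← map_sum]
    rw [FiniteField.sum_pow_lt_card_sub_one (K := K) i (by grind), map_zero]
  simp_rw [add_comm a, add_pow, Finset.sum_comm (γ := K), mul_pow, ← Finset.sum_mul]
  rw [Finset.sum_eq_single_of_mem _ (Finset.self_mem_range_succ _)
    fun i hi hin => by rw [hsum i hi hin, zero_mul, zero_mul, zero_mul]]
  simp [← map_pow, ← map_sum, FiniteField.sum_pow_card_sub_one]

end FiniteField

theorem MvPolynomial.coeff_X_pow_mul' {σ R : Type*} [CommSemiring R] [DecidableEq σ]
    (m : σ →₀ ℕ) (i : σ) (n : ℕ) (f : MvPolynomial σ R) :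
    coeff m (X i ^ n * f) = if n ≤ m i then coeff (m - Finsupp.single i n) f else 0 := by
  simp_rw [X_pow_eq_monomial, coeff_monomial_mul', Finsupp.single_le_iff, one_mul]

theorem MvPolynomial.IsHomogeneous.coeff_single_eq_eval {σ R : Type*} [CommSemiring R]
    [DecidableEq σ] {φ : MvPolynomial σ R} {n : ℕ} (hφ : φ.IsHomogeneous n) (i : σ) :
    coeff (Finsupp.single i n) φ = eval (Pi.single i 1) φ := by
  rw [eval_eq, Finset.sum_eq_single (Finsupp.single i n) (fun d hd hne => ?_)
    fun hi => by rw [notMem_support_iff.mp hi, zero_mul]]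
  · rw [Finset.prod_eq_one fun j hj => ?_, mul_one]
    rw [Finsupp.support_single_subset hj |> Finset.mem_singleton.mp]
    simp
  · obtain ⟨j, hj, hji⟩ : ∃ j ∈ d.support, j ≠ i := by
      by_contra! h
      refine hne (Finsupp.ext fun j => ?_)
      rw [hφ.degree_eq_sum_deg_support hd,
        Finset.sum_eq_single i (fun j hj hji => absurd (h j hj) hji) (by simp)]
      by_cases hji : j = i
      · simp [hji]
      · simp [Ne.symm hji, Finsupp.notMem_support_iff.mp (mt (h j) hji)]
    rw [Finset.prod_eq_zero hj (by simp [hji, Finsupp.mem_support_iff.mp hj]), mul_zero]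

theorem Nat.two_add_div_sub_one_mul_sub_add {n : ℕ} (hn : 0 < n) (a : ℕ) :
    (2 + a / n - 1) * n - a + n = (2 + a / n) * n - a := by
  have h := Nat.lt_div_mul_add (a := a) hn
  generalize a / n = q at h ⊢
  rw [show 2 + q - 1 = q + 1 by omega, add_comm 2, add_mul, add_mul]
  omega

section Projection

variable (R : Type*) [CommSemiring R]

def proj23 : MvPolynomial (Fin 4) R →ₐ[R] MvPolynomial (Fin 4) R :=
  aeval ![0, 0, X 2, X 3]

variable {R}

theorem proj23_monomial (e : Fin 4 →₀ ℕ) (a : R) :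
    proj23 R (monomial e a) = if e 0 = 0 ∧ e 1 = 0 then monomial e a else 0 := by
  rw [proj23, aeval_monomial, monomial_eq, Finsupp.prod_fintype _ _ (by simp),
    Finsupp.prod_fintype _ _ (by simp)]
  split_ifs with he
  · simp [Fin.prod_univ_four, he.1, he.2, algebraMap_eq]
  · rcases not_and_or.mp he with he | he <;> simp [Fin.prod_univ_four, zero_pow he]

theorem coeff_proj23 {e : Fin 4 →₀ ℕ} (he0 : e 0 = 0) (he1 : e 1 = 0)
    (f : MvPolynomial (Fin 4) R) : coeff e (proj23 R f) = coeff e f := by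
  induction f using MvPolynomial.induction_on' with
  | add f g hf hg => rw [map_add, coeff_add, coeff_add, hf, hg]
  | monomial d a =>
    rw [proj23_monomial]
    split_ifs with hd
    · rfl
    · rw [coeff_zero, coeff_monomial, if_neg]
      rintro rfl
      exact hd ⟨he0, he1⟩

theorem MvPolynomial.IsHomogeneous.proj23 {f : MvPolynomial (Fin 4) R} {n : ℕ}
    (hf : f.IsHomogeneous n) : (proj23 R f).IsHomogeneous n := by
  have h := hf.aeval (n := 1) ![0, 0, X 2, (X 3 : MvPolynomial (Fin 4) R)] fun i => by
    fin_cases i <;> simp [isHomogeneous_zero, isHomogeneous_X]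
  rwa [one_mul] at h

end Projection

theorem grevlexLt_of_sum_eq {d e : Fin 4 →₀ ℕ} (hdeg : ∑ i, e i = ∑ i, d i) (hd0 : d 0 = 0)
    (hd1 : d 1 = 0) (h2 : e 0 = 0 → e 1 = 0 → d 2 < e 2) : grevlexLt e d := by
  refine .inr ⟨hdeg, ?_⟩
  by_cases he0 : e 0 = 0
  · by_cases he1 : e 1 = 0
    · exact ⟨2, h2 he0 he1, fun j hj => by fin_cases j <;> simp_all⟩
    · exact ⟨1, by omega, fun j hj => by fin_cases j <;> simp_all⟩
  · exact ⟨0, by omega, fun j hj => by fin_cases j <;> simp_all⟩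

theorem leadMonomialIs_of_proj23 {F : Type} [Field F] {f : MvPolynomial (Fin 4) F}
    {d : Fin 4 →₀ ℕ} (hf : f.IsHomogeneous (∑ i, d i)) (hd0 : d 0 = 0) (hd1 : d 1 = 0)
    (hcoeff : coeff d (proj23 F f) ≠ 0) (hmin : ∀ e ∈ (proj23 F f).support, d 2 ≤ e 2) :
    LeadMonomialIs f d := by
  refine ⟨coeff_proj23 hd0 hd1 f ▸ hcoeff, fun e he hne => ?_⟩
  have hdeg : ∑ i, e i = ∑ i, d i := by
    rw [hf.degree_eq_sum_deg_support he, ← Finsupp.degree_eq_sum]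
    rfl
  refine grevlexLt_of_sum_eq hdeg hd0 hd1 fun he0 he1 => ?_
  have h2 : d 2 ≤ e 2 :=
    hmin e (by rwa [mem_support_iff, coeff_proj23 he0 he1, ← mem_support_iff])
  refine lt_of_le_of_ne h2 fun h2' => hne (Finsupp.ext fun i => ?_)
  simp only [Fin.sum_univ_four] at hdeg
  fin_cases i <;> simp <;> omega

section Action

variable (p : ℕ) [Fact p.Prime] (F : Type) [Field F] [CharP F p]

theorem act_act (g h : Matrix (Fin 2) (Fin 2) (ZMod p)) (f : MvPolynomial (Fin 4) F) :
    act p F g (act p F h f) = act p F (h * g) f := by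
  suffices (act p F g).comp (act p F h) = act p F (h * g) from DFunLike.congr_fun this f
  refine algHom_ext fun i => ?_
  fin_cases i <;>
    simp only [act, AlgHom.comp_apply, aeval_X, Matrix.mul_apply, Fin.sum_univ_two, Fin.isValue,
      Matrix.cons_val_zero, Matrix.cons_val_one, Matrix.cons_val_two, Matrix.cons_val_three,
      Matrix.head_cons, Matrix.tail_cons, Fin.mk_one, Fin.zero_eta, Fin.reduceFinMk,
      map_add, map_mul, map_pow, map_ofNat, aeval_C, algebraMap_eq] <;> ring

theorem act_one : act p F 1 = AlgHom.id F _ := by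
  refine algHom_ext fun i => ?_
  fin_cases i <;> simp [act]

theorem isHomogeneous_act_X (g : Matrix (Fin 2) (Fin 2) (ZMod p)) (i : Fin 4) :
    (act p F g (X i)).IsHomogeneous 1 := by
  fin_cases i <;>
    simp only [act, aeval_X, Fin.isValue,
      Matrix.cons_val_zero, Matrix.cons_val_one, Matrix.cons_val_two, Matrix.cons_val_three,
      Matrix.head_cons, Matrix.tail_cons, Fin.mk_one, Fin.zero_eta, Fin.reduceFinMk,
      ← map_ofNat (C : F →+* MvPolynomial (Fin 4) F), ← map_pow, ← map_mul, ← map_add] <;>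
    repeat' apply IsHomogeneous.add
  all_goals exact isHomogeneous_C_mul_X _ _

variable {p F} in
theorem MvPolynomial.IsHomogeneous.act {f : MvPolynomial (Fin 4) F} {n : ℕ}
    (hf : f.IsHomogeneous n) (g : Matrix (Fin 2) (Fin 2) (ZMod p)) :
    (act p F g f).IsHomogeneous n := by
  have h := hf.aeval (fun i => _root_.act p F g (X i)) (isHomogeneous_act_X p F g)
  rwa [one_mul, ← comp_aeval_apply, aeval_X_left, AlgHom.id_apply] at h

variable {F} in
theorem MvPolynomial.IsHomogeneous.trP {f : MvPolynomial (Fin 4) F} {n : ℕ}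
    (hf : f.IsHomogeneous n) :
    (trP p F f).IsHomogeneous n :=
  IsHomogeneous.sum _ _ _ fun _ _ => hf.act _

variable {F} in
theorem MvPolynomial.IsHomogeneous.trBG {f : MvPolynomial (Fin 4) F} {n : ℕ}
    (hf : f.IsHomogeneous n) :
    (trBG p F f).IsHomogeneous n :=
  (IsHomogeneous.sum _ _ _ fun _ _ => hf.act _).add (hf.act _)

theorem proj23_act_X3 (g : Matrix (Fin 2) (Fin 2) (ZMod p)) :
    proj23 F (act p F g (X 3)) =
      C (3 * (g 0 1).cast * (g 0 0).cast ^ 2) * X 2 + C ((g 0 0).cast ^ 3) * X 3 := by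
  simp [act, proj23, map_ofNat]

theorem proj23_act_upper_X2 (t : ZMod p) :
    proj23 F (act p F !![1, t; 0, 1] (X 2)) = X 2 := by
  simp [act, proj23]

theorem isHomogeneous_Npoly : (Npoly p F).IsHomogeneous p := by
  rw [Npoly]
  have h := IsHomogeneous.prod Finset.univ (fun t : ZMod p => act p F !![1, t; 0, 1] (X 3))
    (fun _ => 1) fun t _ => (isHomogeneous_X F 3).act _
  simpa [ZMod.card] using h

theorem proj23_act_Npoly_eq_zero {g : Matrix (Fin 2) (Fin 2) (ZMod p)} (hg : g 1 0 ≠ 0) :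
    proj23 F (act p F g (Npoly p F)) = 0 := by
  rw [Npoly, map_prod, map_prod]
  refine Finset.prod_eq_zero (Finset.mem_univ (-g 0 0 / g 1 0)) ?_
  have h00 : (!![1, -g 0 0 / g 1 0; 0, 1] * g) 0 0 = 0 := by
    simp [Matrix.mul_apply, Fin.sum_univ_two]
    field_simp
    ring
  rw [act_act, proj23_act_X3, h00]
  simp

theorem eval_proj23_Npoly : eval (Pi.single 3 1) (proj23 F (Npoly p F)) = 1 := by
  simp [Npoly, proj23_act_X3]

theorem proj23_trP_X2_pow_mul_X3_pow (hp : 3 < p) (k : ℕ) :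
    proj23 F (trP p F (X 2 ^ k * X 3 ^ (p - 1))) = -X 2 ^ (k + (p - 1)) := by
  have h3 : (3 : ZMod p) ≠ 0 := by
    have h := (ZMod.natCast_eq_zero_iff 3 p).not.mpr (Nat.not_dvd_of_pos_of_lt (by norm_num) hp)
    exact_mod_cast h
  let φ : ZMod p →+* MvPolynomial (Fin 4) F := C.comp (ZMod.castHom (dvd_refl p) F)
  have hsum := FiniteField.sum_add_mul_pow_card_sub_one φ (X 3) (φ 3 * X 2)
  rw [ZMod.card, mul_pow, ← map_pow, ZMod.pow_card_sub_one_eq_one h3, map_one, one_mul] at hsum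
  simp only [trP, map_sum, map_mul, map_pow, proj23_act_upper_X2, proj23_act_X3]
  calc _ = X 2 ^ k * ∑ t : ZMod p, (X 3 + φ t * (φ 3 * X 2)) ^ (p - 1) := by
        rw [Finset.mul_sum]
        refine Fintype.sum_congr _ _ fun t => ?_
        simp [φ, map_ofNat]
        ring
    _ = _ := by rw [hsum, pow_add]; ring

theorem proj23_trBG_Npoly_pow_mul {j : ℕ} (hj : j ≠ 0) (f : MvPolynomial (Fin 4) F) :
    proj23 F (trBG p F (Npoly p F ^ j * f)) = proj23 F (Npoly p F) ^ j * proj23 F f := by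
  have hvanish : ∀ g : Matrix (Fin 2) (Fin 2) (ZMod p), g 1 0 ≠ 0 →
      proj23 F (act p F g (Npoly p F ^ j * f)) = 0 := fun g hg => by
    rw [map_mul, map_mul, map_pow, map_pow, proj23_act_Npoly_eq_zero p F hg, zero_pow hj,
      zero_mul]
  rw [trBG, map_add, map_sum, hvanish _ (by simp), add_zero,
    Finset.sum_eq_single 0 (fun s _ hs => hvanish _ (by simpa using hs)) (by simp)]
  simp [← Matrix.one_fin_two, act_one]

end Action

/-- for `j ≥ 1` and `m = 2 + ⌊3j/(p-1)⌋`, the lead monomial of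
`tr_B^G(N^j · tr^P(a₂^{(m-1)(p-1)-3j} a₃^{p-1}))` is `a₃^{pj} a₂^{m(p-1)-3j}`. -/
theorem gammafamily (p : ℕ) [Fact p.Prime] (hp : 3 < p)
    (F : Type) [Field F] [CharP F p] (j : ℕ) (hj : 1 ≤ j) :
    LeadMonomialIs
      (trBG p F (Npoly p F ^ j *
        trP p F (X 2 ^ ((2 + 3 * j / (p - 1) - 1) * (p - 1) - 3 * j) * X 3 ^ (p - 1))))
      (Finsupp.single 3 (p * j) +
        Finsupp.single 2 ((2 + 3 * j / (p - 1)) * (p - 1) - 3 * j)) := by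
  set k := (2 + 3 * j / (p - 1) - 1) * (p - 1) - 3 * j
  set K := (2 + 3 * j / (p - 1)) * (p - 1) - 3 * j
  have hK : K = k + (p - 1) := (Nat.two_add_div_sub_one_mul_sub_add (by omega) _).symm
  have hN := isHomogeneous_Npoly p F
  have hproj : proj23 F (trBG p F (Npoly p F ^ j * trP p F (X 2 ^ k * X 3 ^ (p - 1)))) =
      -(X 2 ^ K * proj23 F (Npoly p F) ^ j) := by
    rw [proj23_trBG_Npoly_pow_mul p F (by omega), proj23_trP_X2_pow_mul_X3_pow p F hp, hK]
    ring
  apply leadMonomialIs_of_proj23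
  · convert ((hN.pow j).mul
      (((isHomogeneous_X_pow 2 k).mul (isHomogeneous_X_pow 3 (p - 1))).trP p)).trBG p using 1
    simp [Fin.sum_univ_four, hK]
    ring
  · simp
  · simp
  · rw [hproj, coeff_neg, coeff_X_pow_mul', if_pos (by simp), add_tsub_cancel_right,
      (hN.proj23.pow j).coeff_single_eq_eval, map_pow, eval_proj23_Npoly, one_pow]
    exact neg_ne_zero.mpr one_ne_zero
  · intro e he
    rw [hproj, mem_support_iff, coeff_neg, neg_ne_zero, coeff_X_pow_mul', ite_ne_right_iff] at he
    simpa using he.1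

end
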